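/- Let H be a real Hilbert space with continuous dual H'. Let W be a real vector space equipped with linear maps J : W → H and D : W → H', and a function s : W → ℝ with s(u) ≥ 0 for all u ∈ W; define the triple norm ⦀u⦀ = (‖Ju‖²_H + ‖Du‖²_{H'} + s(u))^{1/2}. Let a : H × H → ℝ be a bilinear form satisfying |a(x,y)| ≤ c_a ‖x‖_H ‖y‖_H for all x, y ∈ H, and define b : W × H → ℝ by b(u,v) = (Du)(v) + a(Ju, v). Assume β > 0 satisfies 2β ≤ c_a² + 1, and assume that for every u ∈ W there exists v_u ∈ H with ‖v_u‖_H ≤ ‖Ju‖_H and b(u, v_u) ≥ β (‖Ju‖²_H + s(u)). Then, setting μ = (c_a² + 1)/(2β) (so μ ≥ 1), for every u ∈ W there exists v ∈ H such that ‖v‖_H ≤ √2 μ ⦀u⦀ and b(u,v) ≥ ½ ⦀u⦀². In particular, for every u ∈ W with ⦀u⦀ ≠ 0, sup over nonzero v ∈ H of b(u,v)/‖v‖_H ≥ (β/(√2 (c_a² + 1))) ⦀u⦀. -/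

import Mathlib

/-!
Let `z` be the Riesz representative of `D u`, so that `‖z‖ = ‖D u‖` and `(D u) z = ‖D u‖²`,
and test with `v = z + μ • v_u`. Then `b(u, z) ≥ ‖D u‖² - c_a ‖J u‖ ‖D u‖`, while
`μ b(u, v_u) ≥ (c_a² + 1)/2 · (‖J u‖² + s u)`; Young's inequality absorbs the cross term and
leaves `½ ⦀u⦀²`. Since `μ ≥ 1`, the triangle inequality gives `‖v‖ ≤ μ (‖D u‖ + ‖J u‖)`, and
`(x + y)² ≤ 2 (x² + y²)` turns this into `√2 μ ⦀u⦀`. Dividing the two bounds gives the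
inf-sup constant.
-/

open Real

theorem InnerProductSpace.exists_norm_eq_and_apply_self_eq_norm_sq
    {H : Type*} [NormedAddCommGroup H] [InnerProductSpace ℝ H] [CompleteSpace H]
    (f : H →L[ℝ] ℝ) : ∃ z : H, ‖z‖ = ‖f‖ ∧ f z = ‖f‖ ^ 2 := by
  set z := (toDual ℝ H).symm f
  have hz : ‖z‖ = ‖f‖ := (toDual ℝ H).symm.norm_map f
  refine ⟨z, hz, ?_⟩
  rw [← toDual_symm_apply, real_inner_self_eq_norm_sq, hz]

theorem norm_add_smul_le_of_one_le {E : Type*} [SeminormedAddCommGroup E] [NormedSpace ℝ E]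
    {μ : ℝ} (hμ : 1 ≤ μ) (x y : E) : ‖x + μ • y‖ ≤ μ * (‖x‖ + ‖y‖) := by
  grw [norm_add_le, norm_smul, norm_of_nonneg (by linarith)]
  nlinarith [norm_nonneg x]

theorem add_le_sqrt_two_mul_sqrt_sq_add_sq_add {x y r : ℝ} (hx : 0 ≤ x) (hy : 0 ≤ y)
    (hr : 0 ≤ r) : x + y ≤ √2 * √(x ^ 2 + y ^ 2 + r) := by
  rw [← sqrt_mul zero_le_two, ← sqrt_sq (add_nonneg hx hy)]
  exact sqrt_le_sqrt (by nlinarith [add_sq_le (a := x) (b := y)])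

theorem half_add_sq_le_sq_sub_mul_add {c d j s : ℝ} (hs : 0 ≤ s) :
    (j ^ 2 + d ^ 2 + s) / 2 ≤ d ^ 2 - c * j * d + (c ^ 2 + 1) / 2 * (j ^ 2 + s) := by
  nlinarith [sq_nonneg (c * j - d), mul_nonneg (sq_nonneg c) hs]

theorem div_le_iSup_div_norm {E : Type*} [NormedAddCommGroup E] (f : E → ℝ) (K : ℝ)
    (hf : ∀ w, f w ≤ K * ‖w‖) {v : E} {m M : ℝ} (hm : 0 < m) (hvM : ‖v‖ ≤ M)
    (hfv : m ≤ f v) : m / M ≤ ⨆ w : {w : E // w ≠ 0}, f w / ‖(w : E)‖ := by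
  have hv : v ≠ 0 := by
    rintro rfl
    have h0 := hf 0
    rw [norm_zero, mul_zero] at h0
    linarith
  have hbdd : BddAbove (Set.range fun w : {w : E // w ≠ 0} => f w / ‖(w : E)‖) := by
    refine ⟨K, ?_⟩
    rintro _ ⟨⟨w, hw⟩, rfl⟩
    exact (div_le_iff₀ (norm_pos_iff.2 hw)).2 (hf w)
  calc m / M ≤ f v / ‖v‖ := div_le_div₀ (hm.le.trans hfv) hfv (norm_pos_iff.2 hv) hvM
    _ ≤ _ := le_ciSup (f := fun w : {w : E // w ≠ 0} => f w / ‖(w : E)‖) hbdd ⟨v, hv⟩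

/-- Abstract inf-sup construction (common core of Lemma 4.1, Propositions 4.5, 4.6
and Lemma 5.2): given a coercivity-type bound realized by a test function `vu`
with `‖vu‖ ≤ ‖J u‖`, the combined test function `v = z + μ • vu` (with `z` the Riesz
representative of `D u` and `μ = (c_a² + 1)/(2β)`) satisfies `‖v‖ ≤ √2 μ ⦀u⦀` and
`b u v ≥ ½ ⦀u⦀²`, whence the inf-sup inequality with constant `β/(√2 (c_a² + 1))`. -/
theorem abstract_infsup_construction
    {W H : Type*} [AddCommGroup W] [Module ℝ W]
    [NormedAddCommGroup H] [InnerProductSpace ℝ H] [CompleteSpace H]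
    (J : W →ₗ[ℝ] H) (D : W →ₗ[ℝ] (H →L[ℝ] ℝ)) (s : W → ℝ) (hs : ∀ u : W, 0 ≤ s u)
    (a : H →ₗ[ℝ] H →ₗ[ℝ] ℝ) (ca : ℝ)
    (ha : ∀ x y : H, |a x y| ≤ ca * ‖x‖ * ‖y‖)
    (β : ℝ) (hβ : 0 < β) (hβca : 2 * β ≤ ca ^ 2 + 1)
    (htest : ∀ u : W, ∃ vu : H, ‖vu‖ ≤ ‖J u‖ ∧
      (D u) vu + a (J u) vu ≥ β * (‖J u‖ ^ 2 + s u)) :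
    ∀ u : W,
      (∃ v : H,
        ‖v‖ ≤ Real.sqrt 2 * ((ca ^ 2 + 1) / (2 * β)) *
            Real.sqrt (‖J u‖ ^ 2 + ‖D u‖ ^ 2 + s u) ∧
        (D u) v + a (J u) v ≥
          (1 / 2) * Real.sqrt (‖J u‖ ^ 2 + ‖D u‖ ^ 2 + s u) ^ 2) ∧
      (Real.sqrt (‖J u‖ ^ 2 + ‖D u‖ ^ 2 + s u) ≠ 0 →
        (β / (Real.sqrt 2 * (ca ^ 2 + 1))) * Real.sqrt (‖J u‖ ^ 2 + ‖D u‖ ^ 2 + s u) ≤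
          ⨆ v : {v : H // v ≠ 0}, ((D u) v.1 + a (J u) v.1) / ‖v.1‖) := by
  intro u
  obtain ⟨vu, hvu, hbvu⟩ := htest u
  obtain ⟨z, hz, hDz⟩ := InnerProductSpace.exists_norm_eq_and_apply_self_eq_norm_sq (D u)
  set μ := (ca ^ 2 + 1) / (2 * β)
  have hμ : 1 ≤ μ := (one_le_div (by positivity)).2 hβca
  have hμβ : μ * β = (ca ^ 2 + 1) / 2 := by
    simp only [μ]
    field_simp
  set b : H → ℝ := fun v => (D u) v + a (J u) v
  have hb_le (w : H) : b w ≤ (‖D u‖ + ca * ‖J u‖) * ‖w‖ := by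
    nlinarith [le_of_abs_le ((D u).le_opNorm w), le_of_abs_le (ha (J u) w)]
  have hbz : ‖D u‖ ^ 2 - ca * ‖J u‖ * ‖D u‖ ≤ b z := by
    have haz := (abs_le.1 (ha (J u) z)).1
    rw [hz] at haz
    simp only [b, hDz]
    linarith
  have hbv : b (z + μ • vu) = b z + μ * b vu := by
    simp only [b, map_add, map_smul, smul_eq_mul]
    ring
  have hnorm : ‖z + μ • vu‖ ≤ √2 * μ * √(‖J u‖ ^ 2 + ‖D u‖ ^ 2 + s u) :=
    calc ‖z + μ • vu‖ ≤ μ * (‖J u‖ + ‖D u‖) := by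
          grw [norm_add_smul_le_of_one_le hμ, hz, hvu, add_comm]
      _ ≤ μ * (√2 * √(‖J u‖ ^ 2 + ‖D u‖ ^ 2 + s u)) := by
          grw [add_le_sqrt_two_mul_sqrt_sq_add_sq_add (norm_nonneg _) (norm_nonneg _) (hs u)]
      _ = _ := by ring
  have hval : 1 / 2 * √(‖J u‖ ^ 2 + ‖D u‖ ^ 2 + s u) ^ 2 ≤ b (z + μ • vu) := by
    have hμbvu := mul_le_mul_of_nonneg_left hbvu.le (by positivity : 0 ≤ μ)
    rw [← mul_assoc, hμβ] at hμbvu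
    rw [sq_sqrt (by positivity [hs u]), hbv]
    linarith [half_add_sq_le_sq_sub_mul_add (c := ca) (d := ‖D u‖) (j := ‖J u‖) (hs u)]
  refine ⟨⟨_, hnorm, hval⟩, fun hN_ne => ?_⟩
  have hN : 0 < √(‖J u‖ ^ 2 + ‖D u‖ ^ 2 + s u) := (sqrt_nonneg _).lt_of_ne' hN_ne
  convert div_le_iSup_div_norm b _ hb_le (by positivity) hnorm hval using 1
  field_simp
  linarith
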